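/- Let L, K be positive integers, let π*, π'* ∈ Δ^{L-1} (open simplex), let φ* be an L×K matrix whose rows lie in the open simplex Δ^{K-1}, and assume φ* has rank L. Fix a constant c > 0, and for θ = (π, π', φ) in Θ = Δ̄^{L-1} × Δ̄^{L-1} × (Δ̄^{K-1})^L define the population objective M(θ) = Σ_{l=1}^L π*_l log π_l + Σ_{l=1}^L Σ_{k=1}^K π*_l φ*_{lk} log φ_{lk} + c Σ_{k=1}^K (Σ_l π'*_l φ*_{lk}) log(Σ_l π'_l φ_{lk}), with values in [−∞, ∞) under the convention log 0 = −∞. Then M attains its maximum over Θ uniquely at θ* = (π*, π'*, φ*): M(θ) ≤ M(θ*) for all θ ∈ Θ, with equality if and only if θ = θ*. -/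

import Mathlib

open Finset

/-- The open simplex: vectors with strictly positive entries summing to 1. -/
def openSimplex {n : ℕ} (v : Fin n → ℝ) : Prop :=
  (∀ i, 0 < v i) ∧ ∑ i, v i = 1

/-- The closed simplex: vectors with nonnegative entries summing to 1. -/
def closedSimplex {n : ℕ} (v : Fin n → ℝ) : Prop :=
  (∀ i, 0 ≤ v i) ∧ ∑ i, v i = 1

/-- Extended-real logarithm with the convention `log 0 = -∞`. -/
noncomputable def elog (x : ℝ) : EReal :=
  if x = 0 then ⊥ else ((Real.log x : ℝ) : EReal)

/-- The parameter space `Θ = Δ̄^{L-1} × Δ̄^{L-1} × (Δ̄^{K-1})^L`. -/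
def paramSpace (L K : ℕ) :
    Set ((Fin L → ℝ) × (Fin L → ℝ) × (Fin L → Fin K → ℝ)) :=
  {θ | closedSimplex θ.1 ∧ closedSimplex θ.2.1 ∧ ∀ l, closedSimplex (θ.2.2 l)}

/-- The population objective
`M(θ) = Σ_l π*_l log π_l + Σ_{l,k} π*_l φ*_{lk} log φ_{lk}
        + c Σ_k (Σ_l π'*_l φ*_{lk}) log (Σ_l π'_l φ_{lk})`,
valued in the extended reals with `log 0 = -∞`. -/
noncomputable def populationObjective (L K : ℕ)
    (πstar π'star : Fin L → ℝ) (φstar : Fin L → Fin K → ℝ) (c : ℝ)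
    (θ : (Fin L → ℝ) × (Fin L → ℝ) × (Fin L → Fin K → ℝ)) : EReal :=
  (∑ l, ((πstar l : ℝ) : EReal) * elog (θ.1 l)) +
  (∑ l, ∑ k, ((πstar l * φstar l k : ℝ) : EReal) * elog (θ.2.2 l k)) +
  ((c : ℝ) : EReal) * ∑ k, ((∑ l, π'star l * φstar l k : ℝ) : EReal) *
    elog (∑ l, θ.2.1 l * θ.2.2 l k)

/-!
Each of the three terms of `M` is a cross-entropy `∑ p log q` of a fixed positive distribution `p`
against a distribution `q` built from `θ`, so by Gibbs' inequality (`log x ≤ x - 1`, strictly for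
`x ≠ 1`) it is maximal exactly when `q = p`: when `π = π*`, `φ = φ*` and `π'ᵀ φ = π'*ᵀ φ*`.
Since `φ*` has full row rank, the last condition together with `φ = φ*` forces `π' = π'*`.
-/

open Matrix

lemma elog_of_pos {x : ℝ} (hx : 0 < x) : elog x = Real.log x := if_neg hx.ne'

lemma elog_zero : elog 0 = ⊥ := if_pos rfl

namespace EReal

@[norm_cast]
lemma coe_finsetSum {ι : Type*} (s : Finset ι) (f : ι → ℝ) :
    ((∑ i ∈ s, f i : ℝ) : EReal) = ∑ i ∈ s, (f i : EReal) :=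
  map_sum (⟨⟨Real.toEReal, coe_zero⟩, coe_add⟩ : ℝ →+ EReal) f s

lemma strictMono_coe_mul {c : ℝ} (hc : 0 < c) : StrictMono ((c : EReal) * ·) := by
  intro x y h
  induction x using EReal.rec <;> induction y using EReal.rec <;>
    simp_all [coe_mul_bot_of_pos hc, coe_mul_top_of_pos hc, ← coe_mul]

lemma add_lt_add_coe_of_lt_or_lt {x y : EReal} {a b : ℝ} (hx : x ≤ a) (hy : y ≤ b)
    (h : x < a ∨ y < b) : x + y < a + b := by
  rcases h with h | h
  · exact add_lt_add_of_lt_of_le' h hy (coe_ne_bot b) fun hb => absurd hb (coe_ne_top b)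
  · rw [add_comm x, add_comm (a : EReal)]
    exact add_lt_add_of_lt_of_le' h hx (coe_ne_bot a) fun ha => absurd ha (coe_ne_top a)

lemma add_add_coe_mul_lt_of_lt_or_lt {x y z : EReal} {a b c d : ℝ} (hc : 0 < c) (hx : x ≤ a)
    (hy : y ≤ b) (hz : z ≤ d) (h : x < a ∨ y < b ∨ z < d) : x + y + c * z < a + b + c * d := by
  have hmono := strictMono_coe_mul hc
  rw [← coe_mul, ← coe_add]
  refine add_lt_add_coe_of_lt_or_lt ?_ ?_ ?_
  · rw [coe_add]
    exact add_le_add hx hy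
  · rw [coe_mul]
    exact hmono.monotone hz
  · rw [coe_add, coe_mul]
    rcases h with h | h | h
    · exact .inl (add_lt_add_coe_of_lt_or_lt hx hy (.inl h))
    · exact .inl (add_lt_add_coe_of_lt_or_lt hx hy (.inr h))
    · exact .inr (hmono h)

end EReal

lemma Matrix.vecMul_injective_of_rank_eq_card {m n R : Type*} [Field R] [Fintype m] [Fintype n]
    {A : Matrix m n R} (h : A.rank = Fintype.card m) : Function.Injective A.vecMul := by
  rw [vecMul_injective_iff, linearIndependent_iff_card_eq_finrank_span, ← h,
    rank_eq_finrank_span_row]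
  rfl

section Gibbs

variable {ι : Type*} [Fintype ι] {w a b : ι → ℝ}

lemma sum_coe_mul_elog_of_pos (ha : ∀ i, 0 < a i) :
    ∑ i, (w i : EReal) * elog (a i) = ((∑ i, w i * Real.log (a i) : ℝ) : EReal) := by
  push_cast
  simp only [elog_of_pos (ha _)]

lemma sum_mul_log_lt_of_ne (hw : ∀ i, 0 < w i) (ha : ∀ i, 0 < a i) (hb : ∀ i, 0 < b i)
    (hsum : ∑ i, w i * (b i / a i) ≤ ∑ i, w i) (hne : b ≠ a) :
    ∑ i, w i * Real.log (b i) < ∑ i, w i * Real.log (a i) := by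
  have hterm (i : ι) :
      w i * Real.log (b i) ≤ w i * Real.log (a i) + w i * (b i / a i - 1) := by
    have := Real.log_le_sub_one_of_pos (div_pos (hb i) (ha i))
    rw [Real.log_div (hb i).ne' (ha i).ne'] at this
    nlinarith [hw i]
  obtain ⟨j, hj⟩ := Function.ne_iff.1 hne
  have hstrict : w j * Real.log (b j) < w j * Real.log (a j) + w j * (b j / a j - 1) := by
    have := Real.log_lt_sub_one_of_pos (div_pos (hb j) (ha j))
      fun h => hj ((div_eq_one_iff_eq (ha j).ne').1 h)
    rw [Real.log_div (hb j).ne' (ha j).ne'] at this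
    nlinarith [hw j]
  calc ∑ i, w i * Real.log (b i)
      < ∑ i, (w i * Real.log (a i) + w i * (b i / a i - 1)) :=
        sum_lt_sum (fun i _ => hterm i) ⟨j, mem_univ j, hstrict⟩
    _ = ∑ i, w i * Real.log (a i) + (∑ i, w i * (b i / a i) - ∑ i, w i) := by
        simp only [sum_add_distrib, mul_sub, mul_one, sum_sub_distrib]
    _ ≤ ∑ i, w i * Real.log (a i) := by linarith

lemma sum_coe_mul_elog_lt_of_ne (hw : ∀ i, 0 < w i) (ha : ∀ i, 0 < a i) (hb : ∀ i, 0 ≤ b i)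
    (hsum : ∑ i, w i * (b i / a i) ≤ ∑ i, w i) (hne : b ≠ a) :
    ∑ i, (w i : EReal) * elog (b i) < ∑ i, (w i : EReal) * elog (a i) := by
  classical
  rw [sum_coe_mul_elog_of_pos ha]
  by_cases hzero : ∃ i, b i = 0
  · obtain ⟨i, hi⟩ := hzero
    rw [← add_sum_erase _ _ (mem_univ i), hi, elog_zero, EReal.coe_mul_bot_of_pos (hw i),
      EReal.bot_add]
    exact EReal.bot_lt_coe _
  · simp only [not_exists] at hzero
    have hb' (i : ι) : 0 < b i := (hb i).lt_of_ne (Ne.symm (hzero i))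
    rw [sum_coe_mul_elog_of_pos hb']
    exact EReal.coe_lt_coe_iff.2 (sum_mul_log_lt_of_ne hw ha hb' hsum hne)

end Gibbs

section Simplex

variable {L K : ℕ}

lemma sum_sum_mul_of_row_sum_eq_one (v : Fin L → ℝ) {A : Fin L → Fin K → ℝ}
    (hA : ∀ l, ∑ k, A l k = 1) : ∑ l, ∑ k, v l * A l k = ∑ l, v l := by
  simp only [← mul_sum, hA, mul_one]

lemma sum_vecMul_of_row_sum_eq_one (v : Fin L → ℝ) {A : Fin L → Fin K → ℝ}
    (hA : ∀ l, ∑ k, A l k = 1) : ∑ k, (v ᵥ* of A) k = ∑ l, v l :=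
  sum_comm.trans (sum_sum_mul_of_row_sum_eq_one v hA)

lemma openSimplex.vecMul {v : Fin L → ℝ} {A : Fin L → Fin K → ℝ} (hv : openSimplex v)
    (hA : ∀ l, openSimplex (A l)) : openSimplex (v ᵥ* of A) := by
  have hL : (univ : Finset (Fin L)).Nonempty := nonempty_of_sum_ne_zero (hv.2 ▸ one_ne_zero)
  refine ⟨fun k => show 0 < ∑ l, v l * A l k from
    sum_pos (fun l _ => mul_pos (hv.1 l) ((hA l).1 k)) hL, ?_⟩
  rw [sum_vecMul_of_row_sum_eq_one v fun l => (hA l).2, hv.2]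

lemma closedSimplex.vecMul {v : Fin L → ℝ} {A : Fin L → Fin K → ℝ} (hv : closedSimplex v)
    (hA : ∀ l, closedSimplex (A l)) : closedSimplex (v ᵥ* of A) :=
  ⟨fun k => show 0 ≤ ∑ l, v l * A l k from sum_nonneg fun l _ => mul_nonneg (hv.1 l) ((hA l).1 k),
    by rw [sum_vecMul_of_row_sum_eq_one v fun l => (hA l).2, hv.2]⟩

lemma openSimplex.sum_coe_mul_elog_lt {p q : Fin L → ℝ} (hp : openSimplex p)
    (hq : closedSimplex q) (hne : q ≠ p) :
    ∑ i, (p i : EReal) * elog (q i) < ∑ i, (p i : EReal) * elog (p i) := by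
  refine sum_coe_mul_elog_lt_of_ne hp.1 hp.1 hq.1 ?_ hne
  simp only [mul_div_cancel₀ _ (hp.1 _).ne', hq.2, hp.2, le_refl]

lemma openSimplex.sum_sum_coe_mul_elog_lt {π : Fin L → ℝ} {φ ψ : Fin L → Fin K → ℝ}
    (hπ : openSimplex π) (hφ : ∀ l, openSimplex (φ l)) (hψ : ∀ l, closedSimplex (ψ l))
    (hne : ψ ≠ φ) :
    ∑ l, ∑ k, ((π l * φ l k : ℝ) : EReal) * elog (ψ l k) <
      ∑ l, ∑ k, ((π l * φ l k : ℝ) : EReal) * elog (φ l k) := by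
  simp only [← Fintype.sum_prod_type']
  refine sum_coe_mul_elog_lt_of_ne (fun p => mul_pos (hπ.1 _) ((hφ _).1 _))
    (fun p => (hφ _).1 _) (fun p => (hψ _).1 _) ?_ ?_
  · have hcancel (l : Fin L) (k : Fin K) : π l * φ l k * (ψ l k / φ l k) = π l * ψ l k := by
      field_simp [((hφ l).1 k).ne']
    simp only [Fintype.sum_prod_type, hcancel, sum_sum_mul_of_row_sum_eq_one π fun l => (hψ l).2,
      sum_sum_mul_of_row_sum_eq_one π fun l => (hφ l).2, le_refl]
  · exact fun h => hne (funext₂ fun l k => congrFun h (l, k))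

end Simplex

lemma populationObjective_apply {L K : ℕ} (πstar π'star : Fin L → ℝ) (φstar : Fin L → Fin K → ℝ)
    (c : ℝ) (θ : (Fin L → ℝ) × (Fin L → ℝ) × (Fin L → Fin K → ℝ)) :
    populationObjective L K πstar π'star φstar c θ =
      (∑ l, (πstar l : EReal) * elog (θ.1 l)) +
      (∑ l, ∑ k, ((πstar l * φstar l k : ℝ) : EReal) * elog (θ.2.2 l k)) +
      (c : EReal) * ∑ k, ((π'star ᵥ* of φstar) k : EReal) * elog ((θ.2.1 ᵥ* of θ.2.2) k) :=
  rfl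

theorem populationObjective_lt_of_ne {L K : ℕ} {πstar π'star : Fin L → ℝ}
    {φstar : Fin L → Fin K → ℝ} {c : ℝ} (hπ : openSimplex πstar) (hπ' : openSimplex π'star)
    (hφ : ∀ l, openSimplex (φstar l)) (hrank : (of φstar).rank = L) (hc : 0 < c)
    {θ : (Fin L → ℝ) × (Fin L → ℝ) × (Fin L → Fin K → ℝ)} (hθ : θ ∈ paramSpace L K)
    (hne : θ ≠ (πstar, π'star, φstar)) :
    populationObjective L K πstar π'star φstar c θ <
      populationObjective L K πstar π'star φstar c (πstar, π'star, φstar) := by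
  obtain ⟨π, π', φ⟩ := θ
  obtain ⟨hπθ, hπ'θ, hφθ⟩ := hθ
  have hmix := hπ'.vecMul hφ
  have hdiff : π ≠ πstar ∨ φ ≠ φstar ∨ π' ᵥ* of φ ≠ π'star ᵥ* of φstar := by
    by_contra! h
    obtain ⟨rfl, rfl, hq⟩ := h
    exact hne (by rw [vecMul_injective_of_rank_eq_card (by simpa using hrank) hq])
  have lt₁ := hπ.sum_coe_mul_elog_lt hπθ
  have lt₂ := hπ.sum_sum_coe_mul_elog_lt hφ hφθ
  have lt₃ := hmix.sum_coe_mul_elog_lt (hπ'θ.vecMul hφθ)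
  have e₁ := sum_coe_mul_elog_of_pos (w := πstar) hπ.1
  have e₂ : ∑ l, ∑ k, ((πstar l * φstar l k : ℝ) : EReal) * elog (φstar l k) =
      ((∑ l, ∑ k, πstar l * φstar l k * Real.log (φstar l k) : ℝ) : EReal) := by
    simp only [sum_coe_mul_elog_of_pos (hφ _).1, EReal.coe_finsetSum]
  have e₃ := sum_coe_mul_elog_of_pos (w := π'star ᵥ* of φstar) hmix.1
  rw [e₁] at lt₁
  rw [e₂] at lt₂
  rw [e₃] at lt₃
  have le₁ := (eq_or_ne π πstar).elim (fun h => h ▸ e₁.le) fun h => (lt₁ h).le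
  have le₂ := (eq_or_ne φ φstar).elim (fun h => h ▸ e₂.le) fun h => (lt₂ h).le
  have le₃ := (eq_or_ne (π' ᵥ* of φ) (π'star ᵥ* of φstar)).elim (fun h => h ▸ e₃.le)
    fun h => (lt₃ h).le
  rw [populationObjective_apply, populationObjective_apply, e₁, e₂, e₃]
  exact EReal.add_add_coe_mul_lt_of_lt_or_lt hc le₁ le₂ le₃ (hdiff.imp lt₁ (Or.imp lt₂ lt₃))

theorem population_objective_unique_max_general
    (L K : ℕ)
    (πstar π'star : Fin L → ℝ) (φstar : Fin L → Fin K → ℝ)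
    (hπ : openSimplex πstar) (hπ' : openSimplex π'star)
    (hφ : ∀ l, openSimplex (φstar l))
    (hrank : (Matrix.of φstar).rank = L)
    (c : ℝ) (hc : 0 < c) :
    ∀ θ ∈ paramSpace L K,
      populationObjective L K πstar π'star φstar c θ ≤
        populationObjective L K πstar π'star φstar c (πstar, π'star, φstar) ∧
      (populationObjective L K πstar π'star φstar c θ =
          populationObjective L K πstar π'star φstar c (πstar, π'star, φstar) ↔
        θ = (πstar, π'star, φstar)) := by
  intro θ hθ
  rcases eq_or_ne θ (πstar, π'star, φstar) with rfl | hne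
  · exact ⟨le_rfl, iff_of_true rfl rfl⟩
  · have hlt := populationObjective_lt_of_ne hπ hπ' hφ hrank hc hθ hne
    exact ⟨hlt.le, iff_of_false hlt.ne hne⟩

/-- The population objective `M` attains its maximum over
`Θ = Δ̄^{L-1} × Δ̄^{L-1} × (Δ̄^{K-1})^L` uniquely at `θ* = (π*, π'*, φ*)`. -/
theorem population_objective_unique_max
    (L K : ℕ) (hL : 0 < L) (hK : 0 < K)
    (πstar π'star : Fin L → ℝ) (φstar : Fin L → Fin K → ℝ)
    (hπ : openSimplex πstar) (hπ' : openSimplex π'star)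
    (hφ : ∀ l, openSimplex (φstar l))
    (hrank : (Matrix.of φstar).rank = L)
    (c : ℝ) (hc : 0 < c) :
    ∀ θ ∈ paramSpace L K,
      populationObjective L K πstar π'star φstar c θ ≤
        populationObjective L K πstar π'star φstar c (πstar, π'star, φstar) ∧
      (populationObjective L K πstar π'star φstar c θ =
          populationObjective L K πstar π'star φstar c (πstar, π'star, φstar) ↔
        θ = (πstar, π'star, φstar)) :=
  population_objective_unique_max_general L K πstar π'star φstar hπ hπ' hφ hrank c hc
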